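/- arXiv:2401.05526 — 3 statements merged into one kernel-verified Lean document; each statement's English description precedes it below -/
import Mathlib

section
/- Let 1 < p ≤ q < ∞. There exist constants c, C > 0, depending only on p and q, such that for every real sequence z = (z_n)_{n≥1}: c · sup_{n≥1} n^{1/q − 1/p} |z_n| ≤ sup{ ‖z·x‖_{ces_q} : x a real sequence with ‖x‖_{ces_p} ≤ 1 } ≤ C · sup_{n≥1} n^{1/q − 1/p} |z_n|, where z·x denotes the coordinatewise product and all quantities take values in [0,∞]. -/
/-!
Upper bound: if `|z k| ≤ W k^(1/p - 1/q)`, the Cesàro means of `|z x|` are at most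
`W (n+1)^(1/p - 1/q) c n`, where `c` are the Cesàro means of `|x|`. Partial sums of `|x|` increase,
so `c m ≥ c n / 2` for `n ≤ m ≤ 2n`; this gives the weak-type bound `(n+1) c n ^ p ≤ 2^p S` with
`S = ‖x‖_{ces_p}^p`. Since `(n+1)^(q/p - 1) c n ^ q = c n ^ p ((n+1) c n ^ p)^((q-p)/p)`, summing
yields `‖z x‖_{ces_q} ≤ 2 W ‖x‖_{ces_p}`.

Lower bound: test against multiples of the unit vector `e_m`, for which
`‖e_m‖_{ces_s}^s = ∑_{n ≥ m} n^(-s)` lies between `2^(-s) m^(1-s)` (the terms `m ≤ n < 2m`) and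
`s/(s-1) m^(1-s)` (integral test).
-/

open ENNReal

/-- The Cesàro norm `‖x‖_{ces_p} = (∑_{n=1}^∞ ((1/n)∑_{k=1}^n |x_k|)^p)^{1/p}`
of a real sequence (indexed so that the entries of the sequence are `x 1, x 2, …`). -/
noncomputable def cesNorm (p : ℝ) (x : ℕ → ℝ) : ℝ≥0∞ :=
  (∑' n : ℕ, (((n : ℝ≥0∞) + 1)⁻¹ * ∑ k ∈ Finset.Icc 1 (n + 1), ENNReal.ofReal |x k|) ^ p) ^ (1 / p)

open Finset

theorem ENNReal.tsum_mul_rpow_one_div {s : ℝ} (hs : 0 < s) (c : ℝ≥0∞) (f : ℕ → ℝ≥0∞) :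
    (∑' n, (c * f n) ^ s) ^ (1 / s) = c * (∑' n, f n ^ s) ^ (1 / s) := by
  simp_rw [ENNReal.mul_rpow_of_nonneg _ _ hs.le]
  rw [ENNReal.tsum_mul_left, ENNReal.mul_rpow_of_nonneg _ _ (by positivity), ← ENNReal.rpow_mul,
    mul_one_div_cancel hs.ne', ENNReal.rpow_one]

/-- `cesMean a n` is the mean of `a 1, …, a (n + 1)`, the `n`-th term of `cesNorm`. -/
noncomputable def cesMean (a : ℕ → ℝ≥0∞) (n : ℕ) : ℝ≥0∞ :=
  ((n : ℝ≥0∞) + 1)⁻¹ * ∑ k ∈ Icc 1 (n + 1), a k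

theorem cesNorm_eq (p : ℝ) (x : ℕ → ℝ) :
    cesNorm p x = (∑' n, cesMean (fun k => ENNReal.ofReal |x k|) n ^ p) ^ (1 / p) := rfl

theorem cesMean_const_mul (c : ℝ≥0∞) (a : ℕ → ℝ≥0∞) (n : ℕ) :
    cesMean (fun k => c * a k) n = c * cesMean a n := by
  simp only [cesMean, ← mul_sum]
  ring

theorem cesNorm_const_mul {s : ℝ} (hs : 0 < s) (c : ℝ) (x : ℕ → ℝ) :
    cesNorm s (fun k => c * x k) = ENNReal.ofReal |c| * cesNorm s x := by
  simp only [cesNorm_eq, abs_mul, ENNReal.ofReal_mul (abs_nonneg c), cesMean_const_mul,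
    ENNReal.tsum_mul_rpow_one_div hs]

theorem cesMean_le_two_mul (a : ℕ → ℝ≥0∞) {n m : ℕ} (hnm : n ≤ m) (hm : m ≤ 2 * n + 1) :
    cesMean a n ≤ 2 * cesMean a m := by
  have hinv : ((n : ℝ≥0∞) + 1)⁻¹ ≤ 2 * ((m : ℝ≥0∞) + 1)⁻¹ := by
    rw [ENNReal.inv_le_iff_le_mul (by simp) (by simp), ← mul_assoc, mul_comm _ (2 : ℝ≥0∞),
      ← div_eq_mul_inv, ENNReal.le_div_iff_mul_le (by simp) (by simp), one_mul]
    exact_mod_cast (by omega : m + 1 ≤ 2 * (n + 1))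
  unfold cesMean
  calc _ ≤ 2 * ((m : ℝ≥0∞) + 1)⁻¹ * ∑ k ∈ Icc 1 (m + 1), a k := by gcongr
    _ = _ := mul_assoc ..

theorem succ_mul_cesMean_rpow_le {p : ℝ} (hp : 0 ≤ p) (a : ℕ → ℝ≥0∞) (n : ℕ) :
    ((n : ℝ≥0∞) + 1) * cesMean a n ^ p ≤ 2 ^ p * ∑' m, cesMean a m ^ p := by
  calc ((n : ℝ≥0∞) + 1) * cesMean a n ^ p = ∑ _m ∈ Icc n (2 * n), cesMean a n ^ p := by
        simp [show 2 * n + 1 - n = n + 1 by omega]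
    _ ≤ ∑ m ∈ Icc n (2 * n), 2 ^ p * cesMean a m ^ p := by
        gcongr with m hm
        rw [← ENNReal.mul_rpow_of_nonneg _ _ hp]
        gcongr
        exact cesMean_le_two_mul a (mem_Icc.1 hm).1 (by linarith [(mem_Icc.1 hm).2])
    _ ≤ 2 ^ p * ∑' m, cesMean a m ^ p := by
        rw [← mul_sum]
        gcongr
        exact ENNReal.sum_le_tsum _

theorem cesMean_rpow_mul_le {α : ℝ} (hα : 0 ≤ α) (a : ℕ → ℝ≥0∞) (n : ℕ) :
    cesMean (fun k => (k : ℝ≥0∞) ^ α * a k) n ≤ ((n : ℝ≥0∞) + 1) ^ α * cesMean a n := by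
  simp only [cesMean]
  rw [mul_left_comm]
  gcongr
  rw [mul_sum]
  gcongr with k hk
  exact_mod_cast (mem_Icc.1 hk).2

theorem tsum_cesMean_rpow_mul_le {p q : ℝ} (hp : 0 < p) (hpq : p ≤ q) (a : ℕ → ℝ≥0∞) :
    ∑' n, cesMean (fun k => (k : ℝ≥0∞) ^ (1 / p - 1 / q) * a k) n ^ q ≤
      2 ^ (q - p) * (∑' n, cesMean a n ^ p) ^ (q / p) := by
  set S := ∑' n, cesMean a n ^ p
  have hq : 0 < q := hp.trans_le hpq
  have hr : 0 ≤ (q - p) / p := div_nonneg (by linarith) hp.le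
  have hα : 0 ≤ 1 / p - 1 / q := by
    rw [sub_nonneg]; exact one_div_le_one_div_of_le hp hpq
  have hterm : ∀ n, cesMean (fun k => (k : ℝ≥0∞) ^ (1 / p - 1 / q) * a k) n ^ q ≤
      2 ^ (q - p) * S ^ ((q - p) / p) * cesMean a n ^ p := by
    intro n
    have hsplit : (((n : ℝ≥0∞) + 1) ^ (1 / p - 1 / q) * cesMean a n) ^ q =
        (((n : ℝ≥0∞) + 1) * cesMean a n ^ p) ^ ((q - p) / p) * cesMean a n ^ p := by
      have hpq' : p * ((q - p) / p) = q - p := by field_simp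
      rw [ENNReal.mul_rpow_of_nonneg _ _ (by linarith), ENNReal.mul_rpow_of_nonneg _ _ hr,
        ← ENNReal.rpow_mul, ← ENNReal.rpow_mul, hpq', mul_assoc,
        ← ENNReal.rpow_add_of_nonneg _ _ (by linarith) hp.le, sub_add_cancel]
      congr 2
      field_simp
    calc _ ≤ (((n : ℝ≥0∞) + 1) ^ (1 / p - 1 / q) * cesMean a n) ^ q :=
          ENNReal.rpow_le_rpow (cesMean_rpow_mul_le hα a n) hq.le
      _ = (((n : ℝ≥0∞) + 1) * cesMean a n ^ p) ^ ((q - p) / p) * cesMean a n ^ p := hsplit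
      _ ≤ (2 ^ p * S) ^ ((q - p) / p) * cesMean a n ^ p :=
          mul_le_mul_left (ENNReal.rpow_le_rpow (succ_mul_cesMean_rpow_le hp.le a n) hr) _
      _ = 2 ^ (q - p) * S ^ ((q - p) / p) * cesMean a n ^ p := by
          rw [ENNReal.mul_rpow_of_nonneg _ _ hr, ← ENNReal.rpow_mul]
          congr 3
          field_simp
  calc _ ≤ ∑' n, 2 ^ (q - p) * S ^ ((q - p) / p) * cesMean a n ^ p := ENNReal.tsum_le_tsum hterm
    _ = 2 ^ (q - p) * S ^ (q / p) := by
      rw [ENNReal.tsum_mul_left, mul_assoc]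
      congr 1
      conv_rhs => rw [show q / p = (q - p) / p + 1 by field_simp; ring]
      rw [ENNReal.rpow_add_of_nonneg _ _ hr zero_le_one, ENNReal.rpow_one]

theorem cesNorm_mul_le {p q : ℝ} (hp : 0 < p) (hpq : p ≤ q) {z : ℕ → ℝ} {W : ℝ≥0∞}
    (hz : ∀ k, 1 ≤ k → ENNReal.ofReal |z k| ≤ W * (k : ℝ≥0∞) ^ (1 / p - 1 / q)) (x : ℕ → ℝ) :
    cesNorm q (fun k => z k * x k) ≤ 2 * W * cesNorm p x := by
  have hq : 0 < q := hp.trans_le hpq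
  set a : ℕ → ℝ≥0∞ := fun k => ENNReal.ofReal |x k|
  have hmean : ∀ n, cesMean (fun k => ENNReal.ofReal |z k * x k|) n ≤
      W * cesMean (fun k => (k : ℝ≥0∞) ^ (1 / p - 1 / q) * a k) n := by
    intro n
    simp only [cesMean]
    rw [mul_left_comm]
    gcongr
    rw [mul_sum]
    gcongr with k hk
    rw [abs_mul, ENNReal.ofReal_mul (abs_nonneg _), ← mul_assoc]
    gcongr
    exact hz k (mem_Icc.1 hk).1
  have hconst : ((2 : ℝ≥0∞) ^ (q - p)) ^ (1 / q) ≤ 2 := by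
    rw [← ENNReal.rpow_mul]
    conv_rhs => rw [← ENNReal.rpow_one 2]
    refine ENNReal.rpow_le_rpow_of_exponent_le one_le_two ?_
    rw [mul_one_div, div_le_one hq]
    linarith
  calc cesNorm q (fun k => z k * x k)
      ≤ (∑' n, (W * cesMean (fun k => (k : ℝ≥0∞) ^ (1 / p - 1 / q) * a k) n) ^ q) ^ (1 / q) := by
        rw [cesNorm_eq]
        gcongr with n
        exact hmean n
    _ = W * (∑' n, cesMean (fun k => (k : ℝ≥0∞) ^ (1 / p - 1 / q) * a k) n ^ q) ^ (1 / q) :=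
        ENNReal.tsum_mul_rpow_one_div hq W _
    _ ≤ W * (2 ^ (q - p) * (∑' n, cesMean a n ^ p) ^ (q / p)) ^ (1 / q) := by
        gcongr
        exact tsum_cesMean_rpow_mul_le hp hpq a
    _ = W * ((2 : ℝ≥0∞) ^ (q - p)) ^ (1 / q) * cesNorm p x := by
        rw [ENNReal.mul_rpow_of_nonneg _ _ (by positivity), ← ENNReal.rpow_mul (∑' n, _),
          show q / p * (1 / q) = 1 / p by field_simp, mul_assoc]
        rfl
    _ ≤ 2 * W * cesNorm p x := by
        rw [mul_comm 2 W]
        gcongr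

theorem ofReal_abs_le_iSup_mul_rpow (s : ℝ) (z : ℕ → ℝ) {k : ℕ} (hk : 1 ≤ k) :
    ENNReal.ofReal |z k| ≤
      (⨆ n : ℕ, ENNReal.ofReal (((n : ℝ) + 1) ^ s * |z (n + 1)|)) * (k : ℝ≥0∞) ^ (-s) := by
  obtain ⟨n, rfl⟩ : ∃ n, k = n + 1 := ⟨k - 1, by omega⟩
  have hn : (0 : ℝ) < n + 1 := by positivity
  calc ENNReal.ofReal |z (n + 1)|
      = ENNReal.ofReal (((n : ℝ) + 1) ^ s * |z (n + 1)|) * ENNReal.ofReal (((n : ℝ) + 1) ^ (-s)) := by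
        rw [← ENNReal.ofReal_mul (by positivity), mul_right_comm, ← Real.rpow_add hn,
          add_neg_cancel, Real.rpow_zero, one_mul]
    _ ≤ _ := by
        gcongr
        · exact le_iSup (fun n : ℕ => ENNReal.ofReal (((n : ℝ) + 1) ^ s * |z (n + 1)|)) n
        · rw [← ENNReal.ofReal_rpow_of_pos hn]
          norm_cast

theorem summable_rpow_neg_nat_add {s : ℝ} (hs : 1 < s) (m : ℕ) :
    Summable (fun n : ℕ => ((n + m : ℕ) : ℝ) ^ (-s)) :=
  (summable_nat_add_iff m).2 (Real.summable_nat_rpow.2 (by linarith))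

theorem tsum_rpow_neg_nat_add_le {s : ℝ} (hs : 1 < s) {m : ℕ} (hm : 0 < m) :
    ∑' n : ℕ, ((n + m : ℕ) : ℝ) ^ (-s) ≤ s / (s - 1) * (m : ℝ) ^ (1 - s) := by
  have hm' : (1 : ℝ) ≤ m := by exact_mod_cast hm
  have hintegral : ∑' n : ℕ, ((n + m + 1 : ℕ) : ℝ) ^ (-s) ≤ (m : ℝ) ^ (1 - s) / (s - 1) := by
    refine (AntitoneOn.tsum_comp_add_le_integral (f := fun x : ℝ => x ^ (-s)) m ?_
      (integrableOn_Ioi_rpow_of_lt (by linarith) (by linarith)) ?_).trans_eq ?_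
    · intro x hx y _ hxy
      exact Real.rpow_le_rpow_of_nonpos (by linarith [Set.mem_Ici.1 hx]) hxy (by linarith)
    · intro t ht
      exact Real.rpow_nonneg (by linarith [Set.mem_Ioi.1 ht]) _
    · rw [integral_Ioi_rpow_of_lt (by linarith) (by linarith), neg_div, ← div_neg]
      congr 2 <;> ring
  have hhead : (m : ℝ) ^ (-s) ≤ (m : ℝ) ^ (1 - s) :=
    Real.rpow_le_rpow_of_exponent_le hm' (by linarith)
  rw [(summable_rpow_neg_nat_add hs m).tsum_eq_zero_add]
  calc _ ≤ (m : ℝ) ^ (1 - s) + (m : ℝ) ^ (1 - s) / (s - 1) := by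
        simp only [zero_add, add_right_comm _ 1 m] at hintegral ⊢
        gcongr
    _ = s / (s - 1) * (m : ℝ) ^ (1 - s) := by
        field_simp [show s - 1 ≠ 0 by linarith]
        ring

theorem le_tsum_rpow_neg_nat_add {s : ℝ} (hs : 1 < s) (m : ℕ) :
    (m : ℝ) * (2 * m) ^ (-s) ≤ ∑' n : ℕ, ((n + m : ℕ) : ℝ) ^ (-s) := by
  calc (m : ℝ) * (2 * m) ^ (-s) = ∑ _n ∈ range m, (2 * m : ℝ) ^ (-s) := by simp
    _ ≤ ∑ n ∈ range m, ((n + m : ℕ) : ℝ) ^ (-s) := by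
        refine sum_le_sum fun n hn => ?_
        have hn := mem_range.1 hn
        have hpos : (0 : ℝ) < ((n + m : ℕ) : ℝ) := by exact_mod_cast (by omega : 0 < n + m)
        refine Real.rpow_le_rpow_of_nonpos hpos ?_ (by linarith)
        push_cast
        linarith [show (n : ℝ) ≤ m by exact_mod_cast hn.le]
    _ ≤ _ := (summable_rpow_neg_nat_add hs m).sum_le_tsum _ (fun n _ => by positivity)

theorem cesMean_single_one {m : ℕ} (hm : 0 < m) (n : ℕ) :
    cesMean (fun k => ENNReal.ofReal |(Pi.single m 1 : ℕ → ℝ) k|) n =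
      if m ≤ n + 1 then ((n : ℝ≥0∞) + 1)⁻¹ else 0 := by
  have hsingle : (fun k => ENNReal.ofReal |(Pi.single m 1 : ℕ → ℝ) k|) = Pi.single m 1 := by
    funext k
    by_cases h : k = m <;> simp [h]
  rw [cesMean, hsingle, sum_pi_single']
  by_cases h : m ≤ n + 1
  · rw [if_pos (mem_Icc.2 ⟨hm, h⟩), if_pos h, mul_one]
  · rw [if_neg (fun h' => h (mem_Icc.1 h').2), if_neg h, mul_zero]

theorem cesNorm_single_one {s : ℝ} (hs : 1 < s) {m : ℕ} (hm : 0 < m) :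
    cesNorm s (Pi.single m 1) =
      ENNReal.ofReal ((∑' n : ℕ, ((n + m : ℕ) : ℝ) ^ (-s)) ^ (1 / s)) := by
  set F := fun n => cesMean (fun k => ENNReal.ofReal |(Pi.single m 1 : ℕ → ℝ) k|) n ^ s
  have hsupp : Function.support F ⊆ Set.range (· + (m - 1)) := by
    intro n hn
    by_contra hnot
    have hlt : n + 1 < m := by
      by_contra h
      exact hnot ⟨n - (m - 1), by simp only; omega⟩
    simp [F, cesMean_single_one hm, if_neg (by omega : ¬ m ≤ n + 1),
      ENNReal.zero_rpow_of_pos (by linarith : (0 : ℝ) < s)] at hn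
  rw [cesNorm_eq, ← ENNReal.ofReal_rpow_of_nonneg (tsum_nonneg fun _ => by positivity)
    (by positivity), ENNReal.ofReal_tsum_of_nonneg (fun _ => by positivity)
    (summable_rpow_neg_nat_add hs m), ← (add_left_injective (m - 1)).tsum_eq hsupp]
  congr 2
  funext n
  have hcast : ((n + (m - 1) : ℕ) : ℝ≥0∞) + 1 = ((n + m : ℕ) : ℝ≥0∞) := by
    norm_cast
    omega
  have hpos : (0 : ℝ) < ((n + m : ℕ) : ℝ) := by exact_mod_cast (by omega : 0 < n + m)
  simp only [F, cesMean_single_one hm, if_pos (by omega : m ≤ n + (m - 1) + 1)]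
  rw [hcast, ← ENNReal.ofReal_rpow_of_pos hpos, ENNReal.ofReal_natCast, ENNReal.rpow_neg,
    ENNReal.inv_rpow]

theorem cesNorm_single_one_le {s : ℝ} (hs : 1 < s) {m : ℕ} (hm : 0 < m) :
    cesNorm s (Pi.single m 1) ≤
      ENNReal.ofReal ((s / (s - 1)) ^ (1 / s) * (m : ℝ) ^ (1 / s - 1)) := by
  have hm' : (0 : ℝ) < m := by exact_mod_cast hm
  have hK : 0 ≤ s / (s - 1) := div_nonneg (by linarith) (by linarith)
  rw [cesNorm_single_one hs hm]
  refine ENNReal.ofReal_le_ofReal ?_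
  calc _ ≤ (s / (s - 1) * (m : ℝ) ^ (1 - s)) ^ (1 / s) :=
        Real.rpow_le_rpow (tsum_nonneg fun _ => by positivity) (tsum_rpow_neg_nat_add_le hs hm)
          (by positivity)
    _ = _ := by
        rw [Real.mul_rpow hK (by positivity), ← Real.rpow_mul hm'.le]
        congr 2
        field_simp

theorem le_cesNorm_single_one {s : ℝ} (hs : 1 < s) {m : ℕ} (hm : 0 < m) :
    ENNReal.ofReal ((m : ℝ) ^ (1 / s - 1) / 2) ≤ cesNorm s (Pi.single m 1) := by
  have hm' : (0 : ℝ) < m := by exact_mod_cast hm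
  rw [cesNorm_single_one hs hm]
  refine ENNReal.ofReal_le_ofReal ?_
  calc (m : ℝ) ^ (1 / s - 1) / 2 = ((m : ℝ) * (2 * m) ^ (-s)) ^ (1 / s) := by
        rw [Real.mul_rpow hm'.le (by positivity), ← Real.rpow_mul (by positivity),
          neg_mul, mul_one_div_cancel (by linarith), Real.rpow_neg_one, Real.rpow_sub hm',
          Real.rpow_one]
        field_simp
    _ ≤ _ := Real.rpow_le_rpow (by positivity) (le_tsum_rpow_neg_nat_add hs m) (by positivity)

theorem le_iSup_cesNorm_mul {p q : ℝ} (hp : 1 < p) (hq : 1 < q) (z : ℕ → ℝ) (n : ℕ) :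
    ENNReal.ofReal (2 * (p / (p - 1)) ^ (1 / p))⁻¹ *
        ENNReal.ofReal (((n : ℝ) + 1) ^ (1 / q - 1 / p) * |z (n + 1)|) ≤
      ⨆ (x : ℕ → ℝ) (_ : cesNorm p x ≤ 1), cesNorm q (fun k => z k * x k) := by
  set m := n + 1
  have hm : 0 < m := n.succ_pos
  have hm' : (0 : ℝ) < m := by exact_mod_cast hm
  have hK : 0 < p / (p - 1) := div_pos (by linarith) (by linarith)
  set B := (p / (p - 1)) ^ (1 / p) * (m : ℝ) ^ (1 / p - 1)
  have hB : 0 < B := by positivity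
  set x : ℕ → ℝ := fun k => B⁻¹ * (Pi.single m 1 : ℕ → ℝ) k
  have hx : cesNorm p x ≤ 1 := by
    rw [cesNorm_const_mul (by linarith)]
    calc _ ≤ ENNReal.ofReal |B⁻¹| * ENNReal.ofReal B := by
          gcongr
          exact cesNorm_single_one_le hp hm
      _ = 1 := by
          rw [← ENNReal.ofReal_mul (abs_nonneg _), abs_of_pos (inv_pos.2 hB),
            inv_mul_cancel₀ hB.ne', ENNReal.ofReal_one]
  have hzx : (fun k => z k * x k) = fun k => (z m * B⁻¹) * (Pi.single m 1 : ℕ → ℝ) k := by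
    funext k
    by_cases h : k = m <;> simp [x, h]
  refine le_iSup₂_of_le x hx ?_
  rw [hzx, cesNorm_const_mul (by linarith)]
  calc _ = ENNReal.ofReal |z m * B⁻¹| * ENNReal.ofReal ((m : ℝ) ^ (1 / q - 1) / 2) := by
        have hexp : (m : ℝ) ^ (1 / q - 1 / p) = m ^ (1 / q - 1) / m ^ (1 / p - 1) := by
          rw [← Real.rpow_sub hm']
          ring_nf
        rw [← ENNReal.ofReal_mul (by positivity), ← ENNReal.ofReal_mul (abs_nonneg _)]
        congr 1
        rw [show (n : ℝ) + 1 = m by simp [m], abs_mul, abs_inv, abs_of_pos hB, hexp]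
        simp only [B, mul_inv]
        ring
    _ ≤ _ := by
        gcongr
        exact le_cesNorm_single_one hq hm

/-- Bennett's identification `M(ces_p, ces_q) = ℓ_∞(n^{1/q−1/p})` for `1 < p ≤ q < ∞`. -/
theorem stmt_14 (p q : ℝ) (hp : 1 < p) (hpq : p ≤ q) :
    ∃ c C : ℝ, 0 < c ∧ 0 < C ∧ ∀ z : ℕ → ℝ,
      ENNReal.ofReal c *
          (⨆ n : ℕ, ENNReal.ofReal (((n : ℝ) + 1) ^ (1 / q - 1 / p) * |z (n + 1)|)) ≤
        (⨆ (x : ℕ → ℝ) (_ : cesNorm p x ≤ 1), cesNorm q (fun n => z n * x n)) ∧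
      (⨆ (x : ℕ → ℝ) (_ : cesNorm p x ≤ 1), cesNorm q (fun n => z n * x n)) ≤
        ENNReal.ofReal C *
          (⨆ n : ℕ, ENNReal.ofReal (((n : ℝ) + 1) ^ (1 / q - 1 / p) * |z (n + 1)|)) := by
  have hq : 1 < q := hp.trans_le hpq
  have hK : 0 < p / (p - 1) := div_pos (by linarith) (by linarith)
  refine ⟨(2 * (p / (p - 1)) ^ (1 / p))⁻¹, 2, by positivity, two_pos, fun z => ⟨?_, ?_⟩⟩
  · rw [ENNReal.mul_iSup]
    exact iSup_le (le_iSup_cesNorm_mul hp hq z)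
  · refine iSup₂_le fun x hx => (cesNorm_mul_le (by linarith) hpq (fun k hk =>
      (ofReal_abs_le_iSup_mul_rpow _ z hk).trans_eq (by rw [neg_sub])) x).trans ?_
    rw [ENNReal.ofReal_ofNat]
    exact (mul_le_mul_right hx _).trans_eq (mul_one _)
end

section
/- Let 1 < q < p < ∞ and let r satisfy 1/r = 1/q − 1/p. There exist constants c, C > 0, depending only on p and q, such that for every real sequence z = (z_n)_{n≥1}: c · ‖z‖_{τℓ_r} ≤ sup{ ‖z·x‖_{τℓ_q} : x a real sequence with ‖x‖_{τℓ_p} ≤ 1 } ≤ C · ‖z‖_{τℓ_r}, where z·x denotes the coordinatewise product and all quantities take values in [0,∞]. -/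
open ENNReal

/-- The Tandori norm `‖x‖_{τℓ_p} = (∑_{n=1}^∞ (sup_{k≥n} |x_k|)^p)^{1/p}`
of a real sequence (indexed so that the entries of the sequence are `x 1, x 2, …`). -/
noncomputable def tlNorm (p : ℝ) (x : ℕ → ℝ) : ℝ≥0∞ :=
  (∑' n : ℕ, (⨆ (k : ℕ) (_ : n + 1 ≤ k), ENNReal.ofReal |x k|) ^ p) ^ (1 / p)

/-!
Upper bound: the tail supremum of `z x` is at most the product of the tail suprema of `z` and `x`,
so Hölder's inequality for `1/q = 1/r + 1/p` gives `‖z x‖_{τℓ_q} ≤ ‖z‖_{τℓ_r} ‖x‖_{τℓ_p}`.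

Lower bound: if `S = ∑ₙ (sup_{k>n} |z_k|)^r` is finite and nonzero, take
`x_k = |z_k|^{r/p} / S^{1/p}`. Then `|z_k x_k| = |z_k|^{r/q} / S^{1/p}`, and since powers commute
with suprema both Tandori norms can be computed exactly: `‖x‖_{τℓ_p} = 1` and
`‖z x‖_{τℓ_q} = S^{1/r}`. The finitely supported truncations of `z` have finite `S`, and their norms
increase to `‖z‖_{τℓ_r}` by monotone convergence. Both constants are `1`.
-/

theorem ENNReal.tsum_Lp_mul_le_Lq_mul_Lr {ι : Type*} {p q r : ℝ} (hp : 0 < p) (hpq : p < q)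
    (hpqr : 1 / p = 1 / q + 1 / r) (f g : ι → ℝ≥0∞) :
    (∑' i, (f i * g i) ^ p) ^ (1 / p) ≤
      (∑' i, f i ^ q) ^ (1 / q) * (∑' i, g i ^ r) ^ (1 / r) := by
  let _ : MeasurableSpace ι := ⊤
  simpa only [MeasureTheory.lintegral_count, Pi.mul_apply] using
    ENNReal.lintegral_Lp_mul_le_Lq_mul_Lr hp hpq hpqr (MeasureTheory.Measure.count (α := ι))
      (f := f) (g := g) measurable_from_top.aemeasurable measurable_from_top.aemeasurable

theorem ENNReal.tsum_iSup_of_monotone {α : Type*} {f : ℕ → α → ℝ≥0∞} (hf : Monotone f) :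
    ∑' a, ⨆ N, f N a = ⨆ N, ∑' a, f N a := by
  simp_rw [ENNReal.tsum_eq_iSup_sum,
    ENNReal.finsetSum_iSup_of_monotone fun a _ _ h => hf h a]
  exact iSup_comm

noncomputable def tailSup (x : ℕ → ℝ) (n : ℕ) : ℝ≥0∞ :=
  ⨆ (k : ℕ) (_ : n + 1 ≤ k), ENNReal.ofReal |x k|

theorem tlNorm_eq_tsum_tailSup (p : ℝ) (x : ℕ → ℝ) :
    tlNorm p x = (∑' n, tailSup x n ^ p) ^ (1 / p) := rfl

theorem tailSup_mono {x y : ℕ → ℝ} (h : ∀ k, |x k| ≤ |y k|) (n : ℕ) :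
    tailSup x n ≤ tailSup y n :=
  iSup₂_mono fun k _ => ENNReal.ofReal_le_ofReal (h k)

theorem tlNorm_mono {p : ℝ} (hp : 0 ≤ p) {x y : ℕ → ℝ} (h : ∀ k, |x k| ≤ |y k|) :
    tlNorm p x ≤ tlNorm p y := by
  simp only [tlNorm_eq_tsum_tailSup]
  gcongr with n
  exact tailSup_mono h n

theorem tailSup_mul_le (x y : ℕ → ℝ) (n : ℕ) :
    tailSup (fun k => x k * y k) n ≤ tailSup x n * tailSup y n := by
  refine iSup₂_le fun k hk => ?_
  rw [abs_mul, ENNReal.ofReal_mul (abs_nonneg _)]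
  exact mul_le_mul' (le_iSup₂_of_le k hk le_rfl) (le_iSup₂_of_le k hk le_rfl)

theorem tlNorm_mul_le {p q r : ℝ} (hq : 0 < q) (hqr : q < r) (hpqr : 1 / q = 1 / r + 1 / p)
    (z x : ℕ → ℝ) : tlNorm q (fun n => z n * x n) ≤ tlNorm r z * tlNorm p x :=
  calc tlNorm q (fun n => z n * x n)
      ≤ (∑' n, (tailSup z n * tailSup x n) ^ q) ^ (1 / q) := by
        rw [tlNorm_eq_tsum_tailSup]
        gcongr with n
        exact tailSup_mul_le z x n
    _ ≤ tlNorm r z * tlNorm p x := ENNReal.tsum_Lp_mul_le_Lq_mul_Lr hq hqr hpqr _ _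

noncomputable def multiplierNorm (p q : ℝ) (z : ℕ → ℝ) : ℝ≥0∞ :=
  ⨆ (x : ℕ → ℝ) (_ : tlNorm p x ≤ 1), tlNorm q (fun n => z n * x n)

theorem multiplierNorm_le {p q r : ℝ} (hq : 0 < q) (hqr : q < r) (hpqr : 1 / q = 1 / r + 1 / p)
    (z : ℕ → ℝ) : multiplierNorm p q z ≤ tlNorm r z :=
  iSup₂_le fun x hx => (tlNorm_mul_le hq hqr hpqr z x).trans (mul_le_of_le_one_right' hx)

theorem multiplierNorm_mono {p q : ℝ} (hq : 0 ≤ q) {y z : ℕ → ℝ} (h : ∀ k, |y k| ≤ |z k|) :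
    multiplierNorm p q y ≤ multiplierNorm p q z := by
  refine iSup₂_mono fun x _ => tlNorm_mono hq fun k => ?_
  rw [abs_mul, abs_mul]
  exact mul_le_mul_of_nonneg_right (h k) (abs_nonneg _)

theorem tailSup_eq_rpow_div {x z : ℕ → ℝ} {s : ℝ} (hs : 0 < s) (c : ℝ≥0∞)
    (h : ∀ k, ENNReal.ofReal |x k| = ENNReal.ofReal |z k| ^ s / c) (n : ℕ) :
    tailSup x n = tailSup z n ^ s / c := by
  simp only [tailSup, h]
  rw [← ENNReal.orderIsoRpow_apply s hs, OrderIso.map_iSup₂]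
  simp only [ENNReal.orderIsoRpow_apply, ENNReal.iSup_div]

theorem tlNorm_eq_of_ofReal_abs_eq {t r : ℝ} (ht : 0 < t) (hr : 0 < r) {x z : ℕ → ℝ}
    (c : ℝ≥0∞) (h : ∀ k, ENNReal.ofReal |x k| = ENNReal.ofReal |z k| ^ (r / t) / c) :
    tlNorm t x = (∑' n, tailSup z n ^ r) ^ (1 / t) / c := by
  have hterm (n : ℕ) : tailSup x n ^ t = tailSup z n ^ r * (c ^ t)⁻¹ := by
    rw [tailSup_eq_rpow_div (div_pos hr ht) c h, ENNReal.div_rpow_of_nonneg _ _ ht.le,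
      ← ENNReal.rpow_mul, div_mul_cancel₀ r ht.ne', div_eq_mul_inv]
  rw [tlNorm_eq_tsum_tailSup, tsum_congr hterm, ENNReal.tsum_mul_right,
    ENNReal.mul_rpow_of_nonneg _ _ (one_div_nonneg.2 ht.le), ENNReal.inv_rpow,
    ← ENNReal.rpow_mul, mul_one_div_cancel ht.ne', ENNReal.rpow_one, ← div_eq_mul_inv]

theorem tlNorm_le_multiplierNorm_of_ne_top {p q r : ℝ} (hp : 0 < p) (hq : 0 < q) (hr : 0 < r)
    (hpqr : 1 / q = 1 / r + 1 / p) {z : ℕ → ℝ} (hz : tlNorm r z ≠ ⊤) :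
    tlNorm r z ≤ multiplierNorm p q z := by
  set S := ∑' n, tailSup z n ^ r with hS
  have hS_top : S ≠ ⊤ := by
    contrapose! hz
    rw [tlNorm_eq_tsum_tailSup, ← hS, hz, ENNReal.top_rpow_of_pos (one_div_pos.2 hr)]
  rcases eq_or_ne S 0 with hS0 | hS0
  · rw [tlNorm_eq_tsum_tailSup, ← hS, hS0, ENNReal.zero_rpow_of_pos (one_div_pos.2 hr)]
    exact zero_le
  set c := S ^ (1 / p)
  have hc0 : c ≠ 0 := (ENNReal.rpow_pos (pos_iff_ne_zero.2 hS0) hS_top).ne'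
  have hc_top : c ≠ ⊤ := ENNReal.rpow_ne_top_of_nonneg (by positivity) hS_top
  set x : ℕ → ℝ := fun k => (ENNReal.ofReal |z k| ^ (r / p) / c).toReal
  have hx (k : ℕ) : ENNReal.ofReal |x k| = ENNReal.ofReal |z k| ^ (r / p) / c := by
    rw [abs_of_nonneg ENNReal.toReal_nonneg, ENNReal.ofReal_toReal]
    exact ENNReal.div_ne_top
      (ENNReal.rpow_ne_top_of_nonneg (by positivity) ENNReal.ofReal_ne_top) hc0
  have hrq : r / q = 1 + r / p := by
    rw [div_eq_mul_one_div r q, hpqr, mul_add, mul_one_div_cancel hr.ne', mul_one_div]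
  have hzx (k : ℕ) : ENNReal.ofReal |z k * x k| = ENNReal.ofReal |z k| ^ (r / q) / c := by
    rw [abs_mul, ENNReal.ofReal_mul (abs_nonneg _), hx, hrq,
      ENNReal.rpow_add_of_nonneg _ _ zero_le_one (by positivity), ENNReal.rpow_one, mul_div_assoc]
  have hx_norm : tlNorm p x = 1 := by
    rw [tlNorm_eq_of_ofReal_abs_eq hp hr c hx, ← hS, ENNReal.div_self hc0 hc_top]
  have hzx_norm : tlNorm q (fun k => z k * x k) = tlNorm r z := by
    rw [tlNorm_eq_of_ofReal_abs_eq hq hr c hzx, ← hS, hpqr, ENNReal.rpow_add _ _ hS0 hS_top,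
      ENNReal.mul_div_cancel_right hc0 hc_top, tlNorm_eq_tsum_tailSup]
  exact le_iSup₂_of_le x hx_norm.le hzx_norm.ge

theorem tlNorm_indicator_Iic_ne_top {r : ℝ} (hr : 0 < r) (z : ℕ → ℝ) (N : ℕ) :
    tlNorm r ((Set.Iic N).indicator z) ≠ ⊤ := by
  have hbound (n : ℕ) : tailSup ((Set.Iic N).indicator z) n ≤
      ∑ k ∈ Finset.range (N + 1), ENNReal.ofReal |z k| := by
    refine iSup₂_le fun k _ => ?_
    by_cases hk : k ≤ N
    · rw [Set.indicator_of_mem (Set.mem_Iic.2 hk)]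
      exact Finset.single_le_sum (f := fun k => ENNReal.ofReal |z k|) (fun _ _ => zero_le)
        (Finset.mem_range.2 (Nat.lt_succ_of_le hk))
    · simp [Set.indicator_of_notMem (s := Set.Iic N) (a := k) (by simpa using hk)]
  have hvanish (n : ℕ) (hn : n ∉ Finset.range N) :
      tailSup ((Set.Iic N).indicator z) n ^ r = 0 := by
    have : tailSup ((Set.Iic N).indicator z) n = 0 := nonpos_iff_eq_zero.1 <|
      iSup₂_le fun k hk => by
        simp only [Finset.mem_range, not_lt] at hn
        simp [Set.indicator_of_notMem (s := Set.Iic N) (a := k) (by simp; omega)]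
    rw [this, ENNReal.zero_rpow_of_pos hr]
  rw [tlNorm_eq_tsum_tailSup, tsum_eq_sum hvanish]
  refine ENNReal.rpow_ne_top_of_nonneg (one_div_nonneg.2 hr.le) <|
    ENNReal.sum_ne_top.2 fun n _ => ENNReal.rpow_ne_top_of_nonneg hr.le ?_
  exact ne_top_of_le_ne_top (ENNReal.sum_ne_top.2 fun k _ => ENNReal.ofReal_ne_top) (hbound n)

theorem tailSup_indicator_Iic_mono (z : ℕ → ℝ) (n : ℕ) :
    Monotone fun N : ℕ => tailSup ((Set.Iic N).indicator z) n := by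
  refine fun N M hNM => tailSup_mono (fun k => ?_) n
  simp only [Set.indicator_apply, Set.mem_Iic]
  split_ifs <;> first | exact le_rfl | (exfalso; omega) | simp

theorem iSup_tailSup_indicator_Iic (z : ℕ → ℝ) (n : ℕ) :
    ⨆ N, tailSup ((Set.Iic N).indicator z) n = tailSup z n := by
  refine le_antisymm (iSup_le fun N => tailSup_mono (fun k => ?_) n) ?_
  · simpa only [Real.norm_eq_abs] using norm_indicator_le_norm_self z k
  · refine iSup₂_le fun k hk => le_iSup_of_le k (le_iSup₂_of_le k hk ?_)
    rw [Set.indicator_of_mem (Set.mem_Iic.2 le_rfl)]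

theorem iSup_tlNorm_indicator_Iic {r : ℝ} (hr : 0 < r) (z : ℕ → ℝ) :
    ⨆ N, tlNorm r ((Set.Iic N).indicator z) = tlNorm r z := by
  have hrpow (n : ℕ) : tailSup z n ^ r = ⨆ N, tailSup ((Set.Iic N).indicator z) n ^ r := by
    rw [← iSup_tailSup_indicator_Iic, ← ENNReal.orderIsoRpow_apply r hr, OrderIso.map_iSup]
    rfl
  have hmono : Monotone fun N n => tailSup ((Set.Iic N).indicator z) n ^ r :=
    fun N M hNM n => ENNReal.rpow_le_rpow (tailSup_indicator_Iic_mono z n hNM) hr.le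
  simp only [tlNorm_eq_tsum_tailSup, tsum_congr hrpow, ENNReal.tsum_iSup_of_monotone hmono]
  rw [← ENNReal.orderIsoRpow_apply (1 / r) (one_div_pos.2 hr), OrderIso.map_iSup]
  rfl

theorem tlNorm_le_multiplierNorm {p q r : ℝ} (hp : 0 < p) (hq : 0 < q) (hr : 0 < r)
    (hpqr : 1 / q = 1 / r + 1 / p) (z : ℕ → ℝ) : tlNorm r z ≤ multiplierNorm p q z := by
  rw [← iSup_tlNorm_indicator_Iic hr]
  refine iSup_le fun N => ?_
  calc tlNorm r ((Set.Iic N).indicator z)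
      ≤ multiplierNorm p q ((Set.Iic N).indicator z) :=
        tlNorm_le_multiplierNorm_of_ne_top hp hq hr hpqr (tlNorm_indicator_Iic_ne_top hr z N)
    _ ≤ multiplierNorm p q z := multiplierNorm_mono hq.le fun k => by
        simpa only [Real.norm_eq_abs] using norm_indicator_le_norm_self z k

/-- The identification `M(τℓ_p, τℓ_q) = τℓ_r` for `1 < q < p < ∞`,
`1/r = 1/q − 1/p` (Bennett; Grosse-Erdmann). -/
theorem stmt_16 (p q r : ℝ) (hq : 1 < q) (hqp : q < p) (hr : 1 / r = 1 / q - 1 / p) :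
    ∃ c C : ℝ, 0 < c ∧ 0 < C ∧ ∀ z : ℕ → ℝ,
      ENNReal.ofReal c * tlNorm r z ≤
          (⨆ (x : ℕ → ℝ) (_ : tlNorm p x ≤ 1), tlNorm q (fun n => z n * x n)) ∧
        (⨆ (x : ℕ → ℝ) (_ : tlNorm p x ≤ 1), tlNorm q (fun n => z n * x n)) ≤
          ENNReal.ofReal C * tlNorm r z := by
  have hq0 : 0 < q := zero_lt_one.trans hq
  have hp0 : 0 < p := hq0.trans hqp
  have hpqr : 1 / q = 1 / r + 1 / p := by rw [hr]; ring
  have hr0 : 0 < r := one_div_pos.1 <| by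
    rw [hr, sub_pos]; exact one_div_lt_one_div_of_lt hq0 hqp
  have hqr : q < r := lt_of_one_div_lt_one_div hr0 <| by
    rw [hpqr]; exact lt_add_of_pos_right _ (one_div_pos.2 hp0)
  refine ⟨1, 1, one_pos, one_pos, fun z => ?_⟩
  simp only [ENNReal.ofReal_one, one_mul]
  exact ⟨tlNorm_le_multiplierNorm hp0 hq0 hr0 hpqr z, multiplierNorm_le hq0 hqr hpqr z⟩
end

section
/- Let 0 < p, q < ∞ and let r satisfy 1/r = 1/p + 1/q. There exists a constant C ≥ 1, depending only on p and q, such that: (a) for all Lebesgue-measurable g, h : (0,∞) → ℝ one has ‖g·h‖_{τL_r} ≤ C · ‖g‖_{τL_p} · ‖h‖_{τL_q}; and (b) every Lebesgue-measurable f : (0,∞) → ℝ with ‖f‖_{τL_r} < ∞ can be written as f = g·h almost everywhere, with g, h Lebesgue-measurable and ‖g‖_{τL_p} · ‖h‖_{τL_q} ≤ C · ‖f‖_{τL_r}. -/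
open ENNReal MeasureTheory

/-- The Tandori norm `‖f‖_{τL_p} = (∫_0^∞ (esssup_{t≥x} |f(t)|)^p dx)^{1/p}`,
the essential supremum taken with respect to Lebesgue measure restricted to `[x,∞)`. -/
noncomputable def TLNorm (p : ℝ) (f : ℝ → ℝ) : ℝ≥0∞ :=
  (∫⁻ x in Set.Ioi (0 : ℝ),
      (essSup (fun t => ENNReal.ofReal |f t|) (volume.restrict (Set.Ici x))) ^ p) ^ (1 / p)

/-!
The essential majorant `f̃ x = esssup_{t ≥ x} |f t|` is multiplicative up to `≤`, and
commutes with powers `|f|^c`. So (a) is Hölder's inequality with `1/r = 1/p + 1/q` applied to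
`g̃ * h̃`, with constant `C = 1`. For (b), write `f = (|f|^(r/p - 1) f) · |f|^(r/q)`: the majorants
of the factors are `f̃^(r/p)` and `f̃^(r/q)`, whose norms multiply to exactly `‖f‖_{τL_r}`.
-/

open Set

namespace ENNReal

theorem essSup_rpow {α : Type*} {m : MeasurableSpace α} (u : α → ℝ≥0∞) (μ : Measure α)
    {c : ℝ} (hc : 0 < c) : essSup (fun x => u x ^ c) μ = essSup u μ ^ c := by
  simpa [orderIsoRpow_apply] using ((orderIsoRpow c hc).essSup_apply u μ).symm

end ENNReal

namespace Real

theorem abs_rpow_sub_one_mul_self (x : ℝ) {a : ℝ} (ha : 0 < a) :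
    |(|x| ^ (a - 1) * x)| = |x| ^ a := by
  rcases eq_or_ne x 0 with rfl | hx
  · simp [Real.zero_rpow ha.ne']
  · rw [abs_mul, abs_of_nonneg (by positivity), ← Real.rpow_add_one (abs_ne_zero.2 hx)]
    ring_nf

theorem rpow_sub_one_mul_self_mul_rpow (x : ℝ) {a b : ℝ} (hab : a + b = 1) :
    |x| ^ (a - 1) * x * |x| ^ b = x := by
  rcases eq_or_ne x 0 with rfl | hx
  · simp
  · rw [mul_right_comm, ← Real.rpow_add (abs_pos.2 hx), show a - 1 + b = 0 by linarith,
      Real.rpow_zero, one_mul]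

end Real

theorem div_add_div_eq_one_of_one_div_eq {p q r : ℝ} (hr : 1 / r = 1 / p + 1 / q) (hr0 : r ≠ 0) :
    r / p + r / q = 1 := by
  rw [div_eq_mul_one_div r p, div_eq_mul_one_div r q, ← mul_add, ← hr, mul_one_div_cancel hr0]

theorem pos_of_one_div_eq {p q r : ℝ} (hp : 0 < p) (hq : 0 < q) (hr : 1 / r = 1 / p + 1 / q) :
    0 < r :=
  one_div_pos.1 (hr ▸ by positivity)

noncomputable def tandoriMajorant (f : ℝ → ℝ) (x : ℝ) : ℝ≥0∞ :=
  essSup (fun t => ENNReal.ofReal |f t|) (volume.restrict (Ici x))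

theorem TLNorm_eq (p : ℝ) (f : ℝ → ℝ) :
    TLNorm p f = (∫⁻ x in Ioi 0, tandoriMajorant f x ^ p) ^ (1 / p) :=
  rfl

theorem antitone_tandoriMajorant (f : ℝ → ℝ) : Antitone (tandoriMajorant f) := fun _ _ hxy =>
  essSup_mono_measure' (Measure.restrict_mono (Ici_subset_Ici.2 hxy) le_rfl)

theorem measurable_tandoriMajorant (f : ℝ → ℝ) : Measurable (tandoriMajorant f) :=
  (antitone_tandoriMajorant f).measurable

theorem tandoriMajorant_mul_le (g h : ℝ → ℝ) (x : ℝ) :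
    tandoriMajorant (fun t => g t * h t) x ≤ tandoriMajorant g x * tandoriMajorant h x := by
  have hprod : (fun t => ENNReal.ofReal |g t * h t|) =
      (fun t => ENNReal.ofReal |g t|) * fun t => ENNReal.ofReal |h t| := by
    funext t
    simp [abs_mul, ENNReal.ofReal_mul (abs_nonneg _)]
  rw [tandoriMajorant, hprod]
  exact ENNReal.essSup_mul_le _ _

theorem tandoriMajorant_of_abs_eq_rpow {f g : ℝ → ℝ} {c : ℝ} (hc : 0 < c)
    (hfg : ∀ t, |g t| = |f t| ^ c) (x : ℝ) :
    tandoriMajorant g x = tandoriMajorant f x ^ c := by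
  simp only [tandoriMajorant, hfg, ← ENNReal.ofReal_rpow_of_nonneg (abs_nonneg _) hc.le]
  exact ENNReal.essSup_rpow _ _ hc

theorem TLNorm_of_abs_eq_rpow {f g : ℝ → ℝ} {c p : ℝ} (hc : 0 < c) (hp : 0 < p)
    (hfg : ∀ t, |g t| = |f t| ^ c) :
    TLNorm p g = TLNorm (c * p) f ^ c := by
  simp only [TLNorm_eq, tandoriMajorant_of_abs_eq_rpow hc hfg, ← ENNReal.rpow_mul]
  congr 1
  field_simp

theorem TLNorm_mul_le {p q r : ℝ} (hp : 0 < p) (hq : 0 < q) (hr : 1 / r = 1 / p + 1 / q)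
    (g h : ℝ → ℝ) :
    TLNorm r (fun t => g t * h t) ≤ TLNorm p g * TLNorm q h := by
  have hr0 := pos_of_one_div_eq hp hq hr
  have hrp : r < p := (div_lt_one hp).1 <| by
    linarith [div_pos hr0 hq, div_add_div_eq_one_of_one_div_eq hr hr0.ne']
  calc TLNorm r (fun t => g t * h t)
      ≤ (∫⁻ x in Ioi 0, (tandoriMajorant g * tandoriMajorant h) x ^ r) ^ (1 / r) := by
        rw [TLNorm_eq]
        gcongr with x
        exact tandoriMajorant_mul_le g h x
    _ ≤ TLNorm p g * TLNorm q h :=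
        ENNReal.lintegral_Lp_mul_le_Lq_mul_Lr hr0 hrp hr _
          (measurable_tandoriMajorant g).aemeasurable (measurable_tandoriMajorant h).aemeasurable

theorem TLNorm_rpow_factors_mul {p q r : ℝ} (hp : 0 < p) (hq : 0 < q)
    (hr : 1 / r = 1 / p + 1 / q) (f : ℝ → ℝ) :
    TLNorm p (fun t => |f t| ^ (r / p - 1) * f t) * TLNorm q (fun t => |f t| ^ (r / q)) =
      TLNorm r f := by
  have hr0 := pos_of_one_div_eq hp hq hr
  have hrp : 0 < r / p := div_pos hr0 hp
  have hrq : 0 < r / q := div_pos hr0 hq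
  rw [TLNorm_of_abs_eq_rpow hrp hp (fun t => Real.abs_rpow_sub_one_mul_self (f t) hrp),
    TLNorm_of_abs_eq_rpow hrq hq (fun t => abs_of_nonneg (by positivity)),
    div_mul_cancel₀ r hp.ne', div_mul_cancel₀ r hq.ne', ← ENNReal.rpow_add_of_nonneg _ _ hrp.le
      hrq.le, div_add_div_eq_one_of_one_div_eq hr hr0.ne', ENNReal.rpow_one]

/-- The product formula `τL_p ⊙ τL_q = τL_r`, where `1/r = 1/p + 1/q`. -/
theorem stmt_18 (p q r : ℝ) (hp : 0 < p) (hq : 0 < q) (hr : 1 / r = 1 / p + 1 / q) :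
    ∃ C : ℝ, 1 ≤ C ∧
      (∀ g h : ℝ → ℝ, Measurable g → Measurable h →
        TLNorm r (fun t => g t * h t) ≤ ENNReal.ofReal C * (TLNorm p g * TLNorm q h)) ∧
      (∀ f : ℝ → ℝ, Measurable f → TLNorm r f < ⊤ →
        ∃ g h : ℝ → ℝ, Measurable g ∧ Measurable h ∧
          (∀ᵐ t ∂(volume.restrict (Set.Ioi (0 : ℝ))), f t = g t * h t) ∧
          TLNorm p g * TLNorm q h ≤ ENNReal.ofReal C * TLNorm r f) := by
  have hsum := div_add_div_eq_one_of_one_div_eq hr (pos_of_one_div_eq hp hq hr).ne'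
  refine ⟨1, le_rfl, fun g h _ _ => ?_, fun f hf _ => ?_⟩
  · simpa using TLNorm_mul_le hp hq hr g h
  · refine ⟨fun t => |f t| ^ (r / p - 1) * f t, fun t => |f t| ^ (r / q),
      (hf.abs.pow_const _).mul hf, hf.abs.pow_const _,
      ae_of_all _ fun t => (Real.rpow_sub_one_mul_self_mul_rpow (f t) hsum).symm, ?_⟩
    rw [TLNorm_rpow_factors_mul hp hq hr, ENNReal.ofReal_one, one_mul]
end
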